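/- Let ψ : [0,∞) → [0,∞), ψ(0) = 0, be continuous, strictly increasing and onto, satisfying property (d₂^loc): limsup_{s↓0} ψ^{−1}(2ψ(s))/s < ∞, and property (Δ₂^loc): limsup_{s↓0} ψ(2s)/ψ(s) < ∞. Then for any continuous path x : [0,1] → (E,d) into a metric space, V_ψ(x;[0,1]) := sup over dissections D of [0,1] of Σ_i ψ(d(x_{t_i},x_{t_{i+1}})) is finite if and only if |x|_{ψ-var;[0,1]} := inf{ ε > 0 : sup_D Σ_i ψ(d(x_{t_i},x_{t_{i+1}})/ε) ≤ 1 } is finite. -/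

import Mathlib

/-!
Continuity of `x` bounds every increment `d(x_s, x_t)` by the diameter `C` of `x([0,1])`, so only
`ψ` on a bounded interval matters. Iterating `(d₂^loc)` `k` times gives
`2^k ψ(r / d₂^k) ≤ ψ(r)` for `r ≤ C`, so a bound `M < 2^k` on the `ψ`-variation makes `ε = d₂^k`
admissible. Conversely, iterating `(Δ₂^loc)` `m` times with `ε ≤ 2^m` gives
`ψ(r) ≤ ψ(2^m r / ε) ≤ Δ₂^m ψ(r / ε)`, so an admissible `ε` bounds the `ψ`-variation by `Δ₂^m`.
-/

open MeasureTheory Filter Set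
open scoped ENNReal NNReal Topology

noncomputable section

/-- A dissection `a = t 0 < t 1 < ... < t n = b` of the interval `[a,b]`. -/
def IsDiss {n : ℕ} (t : Fin (n + 1) → ℝ) (a b : ℝ) : Prop :=
  StrictMono t ∧ t 0 = a ∧ t (Fin.last n) = b

open Finset

lemma IsDiss.mem_Icc {n : ℕ} {t : Fin (n + 1) → ℝ} {a b : ℝ} (ht : IsDiss t a b)
    (i : Fin (n + 1)) : t i ∈ Icc a b := by
  obtain ⟨hmono, ha, hb⟩ := ht
  exact ⟨ha ▸ hmono.monotone (Fin.zero_le i), hb ▸ hmono.monotone (Fin.le_last i)⟩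

lemma IsDiss.dist_mem_Icc_diam {E : Type*} [MetricSpace E] {x : ℝ → E} {a b : ℝ}
    (hx : ContinuousOn x (Icc a b)) {n : ℕ} {t : Fin (n + 1) → ℝ} (ht : IsDiss t a b)
    (i : Fin n) :
    dist (x (t i.castSucc)) (x (t i.succ)) ∈ Icc 0 (Metric.diam (x '' Icc a b)) :=
  ⟨dist_nonneg, Metric.dist_le_diam_of_mem (isCompact_Icc.image_of_continuousOn hx).isBounded
    (mem_image_of_mem x (ht.mem_Icc _)) (mem_image_of_mem x (ht.mem_Icc _))⟩

section Iteration

variable {ψ : ℝ → ℝ} {T : ℝ}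

lemma pow_two_mul_le_of_two_mul_le {d : ℝ} (hd : 1 ≤ d)
    (h : ∀ s ∈ Icc 0 T, 2 * ψ s ≤ ψ (d * s)) (k : ℕ) {u : ℝ} (hu : u ∈ Icc 0 T) :
    2 ^ k * ψ (u / d ^ k) ≤ ψ u := by
  induction k generalizing u with
  | zero => simp
  | succ k ih =>
    have hd0 : 0 < d := one_pos.trans_le hd
    have hud : u / d ∈ Icc 0 T := ⟨div_nonneg hu.1 hd0.le, (div_le_self hu.1 hd).trans hu.2⟩
    calc 2 ^ (k + 1) * ψ (u / d ^ (k + 1)) = 2 * (2 ^ k * ψ (u / d / d ^ k)) := by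
          rw [div_div, ← pow_succ']; ring
      _ ≤ 2 * ψ (u / d) := by linarith [ih hud]
      _ ≤ ψ (d * (u / d)) := h _ hud
      _ = ψ u := by rw [mul_div_cancel₀ u hd0.ne']

lemma le_pow_mul_of_le_mul_two {Δ : ℝ} (hΔ : 0 ≤ Δ)
    (h : ∀ s ∈ Icc 0 T, ψ (2 * s) ≤ Δ * ψ s) (m : ℕ) {s : ℝ} (hs : 0 ≤ s)
    (hsT : 2 ^ m * s ≤ T) : ψ (2 ^ m * s) ≤ Δ ^ m * ψ s := by
  induction m with
  | zero => simp
  | succ m ih =>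
    have hle : 2 ^ m * s ≤ 2 ^ (m + 1) * s := by
      gcongr
      · norm_num
      · omega
    calc ψ (2 ^ (m + 1) * s) = ψ (2 * (2 ^ m * s)) := by rw [pow_succ', mul_assoc]
      _ ≤ Δ * ψ (2 ^ m * s) := h _ ⟨by positivity, hle.trans hsT⟩
      _ ≤ Δ * (Δ ^ m * ψ s) := mul_le_mul_of_nonneg_left (ih (hle.trans hsT)) hΔ
      _ = Δ ^ (m + 1) * ψ s := by ring

lemma exists_pos_forall_pow_two_mul_le (hψ : MonotoneOn ψ (Ici 0))
    (hd2 : ∃ d₂ : ℝ, 0 < d₂ ∧ ∀ s ∈ Icc (0 : ℝ) T, 2 * ψ s ≤ ψ (d₂ * s)) (k : ℕ) :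
    ∃ ε : ℝ, 0 < ε ∧ ∀ r ∈ Icc 0 T, 2 ^ k * ψ (r / ε) ≤ ψ r := by
  obtain ⟨d₂, hd₂, hd2⟩ := hd2
  -- enlarging `d₂` to `max d₂ 1` keeps `(d₂^loc)` by monotonicity and keeps `r / d₂` in `[0, T]`
  have hmax : ∀ s ∈ Icc 0 T, 2 * ψ s ≤ ψ (max d₂ 1 * s) := fun s hs =>
    (hd2 s hs).trans <| hψ (mem_Ici.2 (mul_nonneg hd₂.le hs.1))
      (mem_Ici.2 (mul_nonneg (hd₂.le.trans (le_max_left _ _)) hs.1))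
      (mul_le_mul_of_nonneg_right (le_max_left _ _) hs.1)
  exact ⟨max d₂ 1 ^ k, by positivity, fun r hr =>
    pow_two_mul_le_of_two_mul_le (le_max_right _ _) hmax k hr⟩

lemma exists_nonneg_forall_le_mul_div (hψ : MonotoneOn ψ (Ici 0))
    (hΔ2 : ∀ T : ℝ, 0 < T → ∃ Δ₂ : ℝ, 0 < Δ₂ ∧ ∀ s ∈ Icc (0 : ℝ) T, ψ (2 * s) ≤ Δ₂ * ψ s)
    {ε : ℝ} (hε : 0 < ε) {C : ℝ} (hC : 0 ≤ C) :
    ∃ K : ℝ, 0 ≤ K ∧ ∀ r ∈ Icc 0 C, ψ r ≤ K * ψ (r / ε) := by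
  obtain ⟨m, hm⟩ := pow_unbounded_of_one_lt ε one_lt_two
  obtain ⟨Δ₂, hΔ₂, hΔ⟩ := hΔ2 (2 ^ m * (C / ε) + 1) (by positivity)
  refine ⟨Δ₂ ^ m, by positivity, fun r hr => ?_⟩
  have hrε : 0 ≤ r / ε := div_nonneg hr.1 hε.le
  have hr_le : r ≤ 2 ^ m * (r / ε) := by
    rw [mul_div_assoc', le_div_iff₀ hε, mul_comm r]
    exact mul_le_mul_of_nonneg_right hm.le hr.1
  have hbound : 2 ^ m * (r / ε) ≤ 2 ^ m * (C / ε) + 1 :=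
    le_add_of_le_of_nonneg (by gcongr; exact hr.2) zero_le_one
  exact (hψ hr.1 (hr.1.trans hr_le) hr_le).trans
    (le_pow_mul_of_le_mul_two hΔ₂.le hΔ m hrε hbound)

end Iteration

theorem psi_variation_iff_psi_var_norm_finite_general
    {E : Type*} [MetricSpace E]
    (ψ : ℝ → ℝ)
    (hψ_mono : StrictMonoOn ψ (Ici 0))
    (hd2loc : ∀ T : ℝ, 0 < T → ∃ d₂ : ℝ, 0 < d₂ ∧ ∀ s ∈ Icc (0 : ℝ) T, 2 * ψ s ≤ ψ (d₂ * s))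
    (hΔ2loc : ∀ T : ℝ, 0 < T → ∃ Δ₂ : ℝ, 0 < Δ₂ ∧ ∀ s ∈ Icc (0 : ℝ) T, ψ (2 * s) ≤ Δ₂ * ψ s)
    (x : ℝ → E) (hx : ContinuousOn x (Icc (0 : ℝ) 1)) :
    (∃ M : ℝ, ∀ (n : ℕ) (t : Fin (n + 1) → ℝ), IsDiss t 0 1 →
        ∑ i : Fin n, ψ (dist (x (t i.castSucc)) (x (t i.succ))) ≤ M)
    ↔ (∃ ε : ℝ, 0 < ε ∧ ∀ (n : ℕ) (t : Fin (n + 1) → ℝ), IsDiss t 0 1 →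
        ∑ i : Fin n, ψ (dist (x (t i.castSucc)) (x (t i.succ)) / ε) ≤ 1) := by
  set C := Metric.diam (x '' Icc (0 : ℝ) 1)
  have hC : 0 ≤ C := Metric.diam_nonneg
  constructor
  · rintro ⟨M, hM⟩
    obtain ⟨k, hk⟩ := pow_unbounded_of_one_lt M one_lt_two
    obtain ⟨ε, hε, hψε⟩ := exists_pos_forall_pow_two_mul_le hψ_mono.monotoneOn
      (hd2loc (C + 1) (by positivity)) k
    refine ⟨ε, hε, fun n t ht => le_of_mul_le_mul_left ?_ (by positivity : (0 : ℝ) < 2 ^ k)⟩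
    calc 2 ^ k * ∑ i : Fin n, ψ (dist (x (t i.castSucc)) (x (t i.succ)) / ε)
        ≤ ∑ i : Fin n, ψ (dist (x (t i.castSucc)) (x (t i.succ))) := by
          rw [mul_sum]
          refine sum_le_sum fun i _ => hψε _ ?_
          exact Icc_subset_Icc_right (by linarith) (ht.dist_mem_Icc_diam hx i)
      _ ≤ M := hM n t ht
      _ ≤ 2 ^ k * 1 := by linarith
  · rintro ⟨ε, hε, hadm⟩
    obtain ⟨K, hK, hψK⟩ := exists_nonneg_forall_le_mul_div hψ_mono.monotoneOn hΔ2loc hε hC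
    refine ⟨K, fun n t ht => ?_⟩
    calc ∑ i : Fin n, ψ (dist (x (t i.castSucc)) (x (t i.succ)))
        ≤ K * ∑ i : Fin n, ψ (dist (x (t i.castSucc)) (x (t i.succ)) / ε) := by
          rw [mul_sum]
          exact sum_le_sum fun i _ => hψK _ (ht.dist_mem_Icc_diam hx i)
      _ ≤ K := mul_le_of_le_one_right hK (hadm n t ht)

/-- STATEMENT 17: Suppose `ψ : [0,∞) → [0,∞)`, `ψ(0) = 0`, is continuous, strictly
increasing and onto, and has the properties `(d₂^loc)` (for every `T > 0` there is `d₂`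
with `2ψ(s) ≤ ψ(d₂ s)` on `[0,T]`) and `(Δ₂^loc)` (for every `T > 0` there is `Δ₂` with
`ψ(2s) ≤ Δ₂ ψ(s)` on `[0,T]`).  Then for every continuous path `x : [0,1] → (E,d)`,
`V_ψ(x;[0,1]) < ∞` iff `|x|_{ψ-var;[0,1]} < ∞` (i.e. some `ε > 0` is admissible). -/
theorem psi_variation_iff_psi_var_norm_finite
    {E : Type*} [MetricSpace E]
    (ψ : ℝ → ℝ) (hψ0 : ψ 0 = 0)
    (hψ_cont : ContinuousOn ψ (Ici 0))
    (hψ_mono : StrictMonoOn ψ (Ici 0))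
    (hψ_onto : ∀ y : ℝ, 0 ≤ y → ∃ s : ℝ, 0 ≤ s ∧ ψ s = y)
    (hd2loc : ∀ T : ℝ, 0 < T → ∃ d₂ : ℝ, 0 < d₂ ∧ ∀ s ∈ Icc (0 : ℝ) T, 2 * ψ s ≤ ψ (d₂ * s))
    (hΔ2loc : ∀ T : ℝ, 0 < T → ∃ Δ₂ : ℝ, 0 < Δ₂ ∧ ∀ s ∈ Icc (0 : ℝ) T, ψ (2 * s) ≤ Δ₂ * ψ s)
    (x : ℝ → E) (hx : ContinuousOn x (Icc (0 : ℝ) 1)) :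
    (∃ M : ℝ, ∀ (n : ℕ) (t : Fin (n + 1) → ℝ), IsDiss t 0 1 →
        ∑ i : Fin n, ψ (dist (x (t i.castSucc)) (x (t i.succ))) ≤ M)
    ↔ (∃ ε : ℝ, 0 < ε ∧ ∀ (n : ℕ) (t : Fin (n + 1) → ℝ), IsDiss t 0 1 →
        ∑ i : Fin n, ψ (dist (x (t i.castSucc)) (x (t i.succ)) / ε) ≤ 1) :=
  psi_variation_iff_psi_var_norm_finite_general ψ hψ_mono hd2loc hΔ2loc x hx
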